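/- Let $X \sim \mathcal{N}(0, P)$ and $\zeta \sim \mathcal{N}(0, \sigma^2)$ be independent with $P, \sigma^2 > 0$, $W = X + \zeta$, and $G = \log_2\left(\frac{p_{W|X}(W|X)}{p_W(W)}\right)$ the information density (with $p_{W|X}(\cdot|x)$ the density of $\mathcal{N}(x,\sigma^2)$ and $p_W$ the density of $\mathcal{N}(0,P+\sigma^2)$). Then, measuring $G$ in nats (i.e., using the natural logarithm), $\mathrm{Var}(G) = \frac{P}{P + \sigma^2}$. -/

import Mathlib

/-!
Writing `S = P + σ²`, the information density is a quadratic form in the independent centred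
Gaussians `X` and `ζ`:
`G = log (S / σ²) / 2 + X² / (2S) + X ζ / S + (1 / (2S) - 1 / (2σ²)) ζ²`.
The three monomials are pairwise uncorrelated (by independence, every cross moment contains a
factor `E X = 0` or `E ζ = 0`), so `Var G` is the sum of their variances `Var X² = 2P²`,
`Var (X ζ) = P σ²` and `Var ζ² = 2σ⁴`; the fourth moment `E X⁴ = 3P²` behind `Var X²` comes
from `∫ x⁴ e^{-b x²} dx = Γ(5/2) / b^{5/2}`.
-/

open MeasureTheory ProbabilityTheory Real Set
open scoped NNReal ENNReal Nat

lemma integral_pow_two_mul_mul_exp_neg_mul_sq {b : ℝ} (hb : 0 < b) (n : ℕ) :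
    ∫ x, x ^ (2 * n) * exp (-b * x ^ 2) = (2 * n - 1 : ℕ)‼ * √π / (2 ^ n * b ^ n * √b) := by
  have habs := integral_comp_abs (f := fun x ↦ x ^ (2 * n) * exp (-b * x ^ 2))
  simp only [sq_abs, (even_two_mul n).pow_abs] at habs
  have hIoi : ∫ x in Ioi (0 : ℝ), x ^ (2 * n) * exp (-b * x ^ 2)
      = ∫ x in Ioi (0 : ℝ), x ^ (2 * n : ℝ) * exp (-b * x ^ (2 : ℝ)) := by
    refine setIntegral_congr_fun measurableSet_Ioi fun x _ ↦ ?_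
    norm_cast
  have hpow : b ^ (-(2 * n + 1 : ℝ) / 2) = (b ^ n * √b)⁻¹ := by
    rw [neg_div, rpow_neg hb.le, show (2 * n + 1 : ℝ) / 2 = n + 1 / 2 by ring,
      rpow_add hb, rpow_natCast, sqrt_eq_rpow]
  rw [habs, hIoi, integral_rpow_mul_exp_neg_mul_rpow two_pos
    (by linarith [n.cast_nonneg (α := ℝ)]) hb, hpow,
    show (2 * n + 1 : ℝ) / 2 = n + 1 / 2 by ring, Gamma_nat_add_half]
  field_simp

lemma integral_pow_two_mul_gaussianReal (v : ℝ≥0) (n : ℕ) :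
    ∫ x, x ^ (2 * n) ∂gaussianReal 0 v = (2 * n - 1 : ℕ)‼ * (v : ℝ) ^ n := by
  rcases eq_or_ne v 0 with rfl | hv
  · cases n <;> simp [gaussianReal_zero_var]
  have hb : 0 < (2 * (v : ℝ))⁻¹ := by positivity
  calc ∫ x, x ^ (2 * n) ∂gaussianReal 0 v
      = (√(2 * π * v))⁻¹ * ∫ x, x ^ (2 * n) * exp (-(2 * (v : ℝ))⁻¹ * x ^ 2) := by
        rw [integral_gaussianReal_eq_integral_smul hv, ← integral_const_mul]
        congr 1 with x
        simp only [gaussianPDFReal_def, smul_eq_mul, sub_zero]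
        field_simp
    _ = (2 * n - 1 : ℕ)‼ * (v : ℝ) ^ n := by
        rw [integral_pow_two_mul_mul_exp_neg_mul_sq hb, sqrt_inv,
          show (2 * π * v : ℝ) = π * (2 * v) by ring, sqrt_mul pi_pos.le, inv_pow, mul_pow]
        field_simp

instance : ENNReal.HolderTriple 4 4 2 := ⟨by
  rw [show (4 : ℝ≥0∞) = 2 * 2 by norm_num, ENNReal.mul_inv (by simp) (by simp), ← add_mul]
  simp [ENNReal.inv_two_add_inv_two]⟩

lemma variance_fun_sq_gaussianReal (v : ℝ≥0) :
    Var[fun x ↦ x ^ 2; gaussianReal 0 v] = 2 * (v : ℝ) ^ 2 := by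
  have hid : MemLp id 4 (gaussianReal 0 v) := memLp_id_gaussianReal' 4 (by simp)
  have hsq : MemLp (fun x : ℝ ↦ x ^ 2) 2 (gaussianReal 0 v) := by
    simpa only [id, sq] using hid.mul' hid
  have h2 : ∫ x, x ^ 2 ∂gaussianReal 0 v = v := by
    simpa using integral_pow_two_mul_gaussianReal v 1
  have h4 : ∫ x, x ^ 4 ∂gaussianReal 0 v = 3 * (v : ℝ) ^ 2 := by
    simpa [Nat.doubleFactorial] using integral_pow_two_mul_gaussianReal v 2
  rw [variance_eq_sub hsq]
  simp only [Pi.pow_apply, ← pow_mul]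
  rw [h4, h2]
  ring

namespace ProbabilityTheory

section HasLawGaussian

variable {Ω : Type*} {mΩ : MeasurableSpace Ω} {μ : Measure Ω} {X : Ω → ℝ} {m : ℝ} {v : ℝ≥0}

lemma HasLaw.integral_eq_of_gaussianReal (hX : HasLaw X (gaussianReal m v) μ) :
    μ[X] = m := by
  rw [hX.integral_eq, integral_id_gaussianReal]

lemma HasLaw.variance_eq_of_gaussianReal (hX : HasLaw X (gaussianReal m v) μ) :
    Var[X; μ] = v := by
  rw [hX.variance_eq, variance_id_gaussianReal]

lemma HasLaw.variance_sq_eq_of_gaussianReal (hX : HasLaw X (gaussianReal 0 v) μ) :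
    Var[fun ω ↦ X ω ^ 2; μ] = 2 * (v : ℝ) ^ 2 := by
  rw [← variance_fun_sq_gaussianReal v, ← hX.map_eq,
    variance_map (by fun_prop) hX.aemeasurable]
  rfl

end HasLawGaussian

section Independence

variable {Ω : Type*} {mΩ : MeasurableSpace Ω} {μ : Measure Ω} {X Y : Ω → ℝ}

lemma IndepFun.variance_fun_mul_of_integral_eq_zero (hXY : X ⟂ᵢ[μ] Y)
    (hX : AEMeasurable X μ) (hY : AEMeasurable Y μ) (hX0 : μ[X] = 0) (hY0 : μ[Y] = 0) :
    Var[fun ω ↦ X ω * Y ω; μ] = Var[X; μ] * Var[Y; μ] := by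
  have hXY0 : μ[fun ω ↦ X ω * Y ω] = 0 := by
    rw [hXY.integral_fun_mul_eq_mul_integral hX.aestronglyMeasurable hY.aestronglyMeasurable,
      hX0, zero_mul]
  have hsq : (fun ω ↦ X ω ^ 2) ⟂ᵢ[μ] (fun ω ↦ Y ω ^ 2) :=
    hXY.comp (measurable_id.pow_const 2) (measurable_id.pow_const 2)
  rw [variance_of_integral_eq_zero (by fun_prop) hXY0, variance_of_integral_eq_zero hX hX0,
    variance_of_integral_eq_zero hY hY0,
    ← hsq.integral_fun_mul_eq_mul_integral (hX.pow_const 2).aestronglyMeasurable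
      (hY.pow_const 2).aestronglyMeasurable]
  simp only [mul_pow]

lemma IndepFun.covariance_comp_fun_mul_eq_zero (hXY : X ⟂ᵢ[μ] Y) {f : ℝ → ℝ}
    (hf : Measurable f) (hX : AEMeasurable X μ) (hY : AEMeasurable Y μ) (hY0 : μ[Y] = 0) :
    cov[fun ω ↦ f (X ω), fun ω ↦ X ω * Y ω; μ] = 0 := by
  set m := μ[fun ω ↦ f (X ω)]
  have hXY0 : μ[fun ω ↦ X ω * Y ω] = 0 := by
    rw [hXY.integral_fun_mul_eq_mul_integral hX.aestronglyMeasurable hY.aestronglyMeasurable,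
      hY0, mul_zero]
  have hindep : (fun ω ↦ (f (X ω) - m) * X ω) ⟂ᵢ[μ] Y :=
    hXY.comp (show Measurable fun x ↦ (f x - m) * x by fun_prop) measurable_id
  calc cov[fun ω ↦ f (X ω), fun ω ↦ X ω * Y ω; μ]
      = ∫ ω, (f (X ω) - m) * X ω * Y ω ∂μ := by
        simp only [covariance, hXY0, sub_zero, mul_assoc, m]
    _ = 0 := by
        rw [hindep.integral_fun_mul_eq_mul_integral
          (((hf.comp_aemeasurable hX).sub_const m).mul hX).aestronglyMeasurable
          hY.aestronglyMeasurable, hY0, mul_zero]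

end Independence

lemma variance_quadratic_of_indepFun_of_hasLaw_gaussianReal {Ω : Type*} {mΩ : MeasurableSpace Ω}
    {μ : Measure Ω} [IsProbabilityMeasure μ] {X Y : Ω → ℝ} {v w : ℝ≥0}
    (hX : HasLaw X (gaussianReal 0 v) μ) (hY : HasLaw Y (gaussianReal 0 w) μ) (hXY : X ⟂ᵢ[μ] Y)
    (a b c : ℝ) :
    Var[fun ω ↦ a * X ω ^ 2 + b * (X ω * Y ω) + c * Y ω ^ 2; μ]
      = 2 * a ^ 2 * v ^ 2 + b ^ 2 * v * w + 2 * c ^ 2 * w ^ 2 := by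
  have hX4 : MemLp X 4 μ := hX.hasGaussianLaw.memLp (by simp)
  have hY4 : MemLp Y 4 μ := hY.hasGaussianLaw.memLp (by simp)
  have hXX : MemLp (fun ω ↦ X ω ^ 2) 2 μ := by simpa only [sq] using hX4.mul' hX4
  have hYY : MemLp (fun ω ↦ Y ω ^ 2) 2 μ := by simpa only [sq] using hY4.mul' hY4
  have hXY2 : MemLp (fun ω ↦ X ω * Y ω) 2 μ := hY4.mul' hX4
  have hsq : (fun ω ↦ X ω ^ 2) ⟂ᵢ[μ] (fun ω ↦ Y ω ^ 2) :=
    hXY.comp (measurable_id.pow_const 2) (measurable_id.pow_const 2)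
  have hcovX : cov[fun ω ↦ X ω ^ 2, fun ω ↦ X ω * Y ω; μ] = 0 :=
    hXY.covariance_comp_fun_mul_eq_zero (f := fun x ↦ x ^ 2) (by fun_prop) hX.aemeasurable
      hY.aemeasurable hY.integral_eq_of_gaussianReal
  have hcovY : cov[fun ω ↦ Y ω ^ 2, fun ω ↦ X ω * Y ω; μ] = 0 := by
    simpa only [mul_comm (X _)] using hXY.symm.covariance_comp_fun_mul_eq_zero
      (f := fun y ↦ y ^ 2) (by fun_prop) hY.aemeasurable hX.aemeasurable
      hX.integral_eq_of_gaussianReal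
  have hcov : cov[fun ω ↦ a * X ω ^ 2 + c * Y ω ^ 2, fun ω ↦ b * (X ω * Y ω); μ] = 0 := by
    change cov[(fun ω ↦ a * X ω ^ 2) + (fun ω ↦ c * Y ω ^ 2), _; μ] = 0
    rw [covariance_add_left (hXX.const_mul a) (hYY.const_mul c) (hXY2.const_mul b),
      covariance_const_mul_left, covariance_const_mul_right, hcovX,
      covariance_const_mul_left, covariance_const_mul_right, hcovY]
    ring
  have hsplit : (fun ω ↦ a * X ω ^ 2 + b * (X ω * Y ω) + c * Y ω ^ 2)
      = fun ω ↦ (a * X ω ^ 2 + c * Y ω ^ 2) + b * (X ω * Y ω) := by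
    ext ω; ring
  rw [hsplit, variance_fun_add (X := fun ω ↦ a * X ω ^ 2 + c * Y ω ^ 2)
      ((hXX.const_mul a).add (hYY.const_mul c)) (hXY2.const_mul b), hcov,
    (hsq.comp (measurable_const_mul a) (measurable_const_mul c)).variance_fun_add
      (hXX.const_mul a) (hYY.const_mul c),
    variance_const_mul, variance_const_mul, variance_const_mul,
    hX.variance_sq_eq_of_gaussianReal, hY.variance_sq_eq_of_gaussianReal,
    hXY.variance_fun_mul_of_integral_eq_zero hX.aemeasurable hY.aemeasurable
      hX.integral_eq_of_gaussianReal hY.integral_eq_of_gaussianReal,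
    hX.variance_eq_of_gaussianReal, hY.variance_eq_of_gaussianReal]
  ring

end ProbabilityTheory

lemma log_gaussian_density_ratio {s t : ℝ} (hs : 0 < s) (ht : 0 < t) (u w : ℝ) :
    log ((√(2 * π * s))⁻¹ * exp (-u ^ 2 / (2 * s)) /
        ((√(2 * π * t))⁻¹ * exp (-w ^ 2 / (2 * t))))
      = log (t / s) / 2 + (w ^ 2 / (2 * t) - u ^ 2 / (2 * s)) := by
  have hsqrt : √(2 * π * t) / √(2 * π * s) = √(t / s) := by
    rw [← sqrt_div' _ (by positivity)]
    congr 1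
    field_simp
  calc log ((√(2 * π * s))⁻¹ * exp (-u ^ 2 / (2 * s)) /
        ((√(2 * π * t))⁻¹ * exp (-w ^ 2 / (2 * t))))
      = log (√(t / s) * exp (w ^ 2 / (2 * t) - u ^ 2 / (2 * s))) := by
        rw [← hsqrt, exp_sub, neg_div, neg_div, exp_neg, exp_neg]
        field_simp
    _ = log (t / s) / 2 + (w ^ 2 / (2 * t) - u ^ 2 / (2 * s)) := by
        rw [log_mul (by positivity) (exp_ne_zero _), log_exp, log_sqrt (by positivity)]

/-- The variance of the AWGN information density (in nats) with Gaussian input of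
power `P` and noise variance `σ²` equals the dispersion
`P / (P + σ²)`. -/
theorem awgn_information_density_variance
    {Ω : Type*} [MeasureSpace Ω] [IsProbabilityMeasure (ℙ : Measure Ω)]
    (P σ2 : ℝ) (hP : 0 < P) (hσ : 0 < σ2)
    (X ζ : Ω → ℝ) (hX : Measurable X) (hζ : Measurable ζ)
    (hXd : Measure.map X ℙ = gaussianReal 0 P.toNNReal)
    (hζd : Measure.map ζ ℙ = gaussianReal 0 σ2.toNNReal)
    (hindep : IndepFun X ζ ℙ)
    (W : Ω → ℝ) (hW : ∀ ω, W ω = X ω + ζ ω)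
    (pWX : ℝ → ℝ → ℝ)
    (hpWX : ∀ x w, pWX x w = (Real.sqrt (2 * π * σ2))⁻¹ *
      Real.exp (-(w - x) ^ 2 / (2 * σ2)))
    (pW : ℝ → ℝ)
    (hpW : ∀ w, pW w = (Real.sqrt (2 * π * (P + σ2)))⁻¹ *
      Real.exp (-w ^ 2 / (2 * (P + σ2))))
    (G : Ω → ℝ) (hG : ∀ ω, G ω = Real.log (pWX (X ω) (W ω) / pW (W ω))) :
    variance G ℙ = P / (P + σ2) := by
  have hS : 0 < P + σ2 := by linarith
  have hG_quadratic : G = fun ω ↦ log ((P + σ2) / σ2) / 2 +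
      ((2 * (P + σ2))⁻¹ * X ω ^ 2 + (P + σ2)⁻¹ * (X ω * ζ ω)
        + ((2 * (P + σ2))⁻¹ - (2 * σ2)⁻¹) * ζ ω ^ 2) := by
    ext ω
    rw [hG, hpWX, hpW, hW, log_gaussian_density_ratio hσ hS]
    field_simp
    ring
  rw [hG_quadratic, variance_const_add (by fun_prop),
    variance_quadratic_of_indepFun_of_hasLaw_gaussianReal ⟨hX.aemeasurable, hXd⟩
      ⟨hζ.aemeasurable, hζd⟩ hindep, coe_toNNReal _ hP.le, coe_toNNReal _ hσ.le]
  field_simp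
  ring
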